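/- For every vector x ∈ S^7, the set D(x, ω̄_2160) of dot products of x with the points of the 2_41 polytope ω̄_2160 has at least five distinct elements. -/

import Mathlib

open MeasureTheory Metric
open scoped RealInnerProductSpace

noncomputable section

/-- `E n` is the Euclidean space `ℝ^n`; the unit sphere `S^{n-1}` is `Metric.sphere (0 : E n) 1`. -/
abbrev E (n : ℕ) : Type := EuclideanSpace ℝ (Fin n)

/-- Type I vectors of the `2_41` polytope: `4` zero coordinates and `4` coordinates `±1/2`. -/
noncomputable def typeI : Finset (E 8) :=
  letI : DecidableEq (E 8) := Classical.decEq _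
  ((Finset.univ : Finset (Finset (Fin 8) × (Fin 8 → Bool))).filter fun p => p.1.card = 4).image
    (fun p => (WithLp.toLp 2 (fun i => if i ∈ p.1 then (if p.2 i then -(1/2 : ℝ) else 1/2) else 0) : E 8))

/-- Type II vectors of the `2_41` polytope: `7` zero coordinates and one coordinate `±1`. -/
noncomputable def typeII : Finset (E 8) :=
  letI : DecidableEq (E 8) := Classical.decEq _
  (Finset.univ : Finset (Fin 8 × Bool)).image
    (fun p => (WithLp.toLp 2 (fun i => if i = p.1 then (if p.2 then -(1 : ℝ) else 1) else 0) : E 8))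

/-- Type III vectors of the `2_41` polytope: `7` coordinates `±1/4`, one coordinate `±3/4`,
with an odd total number of negative coordinates. -/
noncomputable def typeIII : Finset (E 8) :=
  letI : DecidableEq (E 8) := Classical.decEq _
  ((Finset.univ : Finset (Fin 8 × (Fin 8 → Bool))).filter fun p =>
      ¬ Even (Finset.univ.filter fun i => p.2 i = true).card).image
    (fun p => (WithLp.toLp 2 (fun i =>
      (if p.2 i then (-1 : ℝ) else 1) * (if i = p.1 then 3/4 else 1/4)) : E 8))

/-- The `2_41` polytope on `S^7`: the `2160` vectors of types I, II and III. -/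
noncomputable def poly241 : Finset (E 8) :=
  letI : DecidableEq (E 8) := Classical.decEq _
  typeI ∪ typeII ∪ typeIII

/-! Only the type I and type II points are needed. Their dot products with `x` are the numbers
`±x_t` and `(±x_a ± x_b ± x_c ± x_d) / 2` for distinct `a, b, c, d`, with all sign patterns, so
the set of dot products is symmetric and it suffices to find three distinct nonnegative ones.
If `x` has four nonzero coordinates, labelled so that `|x_c| ≤ |x_a|` and `|x_d| ≤ |x_b|`,
take `(|x_a| + |x_b| + |x_c| ± |x_d|) / 2` and `(|x_a| + |x_b| - |x_c| - |x_d|) / 2`.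
Otherwise `x` has a nonzero coordinate `x_a` and at least three zero coordinates, which give
`|x_a|`, `|x_a| / 2` and `0`. -/

lemma five_le_ncard_of_mem_of_neg_mem {α : Type*} [Field α] [LinearOrder α]
    [IsStrictOrderedRing α] {s : Set α} (hs : s.Finite) {p q r : α} (hr : 0 ≤ r) (hrq : r < q)
    (hqp : q < p) (hp : p ∈ s) (hq : q ∈ s) (hrs : r ∈ s) (hnp : -p ∈ s) (hnq : -q ∈ s) :
    5 ≤ s.ncard := by
  have hsub : ({-p, -q, r, q, p} : Set α) ⊆ s := by simp [Set.insert_subset_iff, *]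
  refine le_trans (le_of_eq ?_) (Set.ncard_le_ncard hsub hs)
  rw [Set.ncard_insert_of_notMem, Set.ncard_insert_of_notMem, Set.ncard_insert_of_notMem,
    Set.ncard_pair hqp.ne] <;>
  · intro h
    simp only [Set.mem_insert_iff, Set.mem_singleton_iff] at h
    rcases h with h | h | h | h <;> linarith

lemma EuclideanSpace.real_inner_eq_sum_mul {ι : Type*} [Fintype ι] (x y : EuclideanSpace ℝ ι) :
    ⟪x, y⟫ = ∑ i, x i * y i := by
  simp [PiLp.inner_apply, mul_comm]

lemma exists_ite_neg_eq_of_abs_eq {α : Type*} [AddCommGroup α] [LinearOrder α]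
    [IsOrderedAddMonoid α] {c y : α} (h : |c| = |y|) :
    ∃ b : Bool, (if b then -y else y) = c := by
  rcases abs_eq_abs.mp h with rfl | rfl
  exacts [⟨false, rfl⟩, ⟨true, rfl⟩]

/-- The set `D(x, ω̄_2160)`. -/
def dotProducts (x : E 8) : Set ℝ := (fun y => ⟪x, y⟫) '' (↑poly241 : Set (E 8))

lemma dotProducts_finite (x : E 8) : (dotProducts x).Finite :=
  poly241.finite_toSet.image _

lemma mem_dotProducts_of_abs_eq (x : E 8) (t : Fin 8) {c : ℝ} (hc : |c| = |x t|) :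
    c ∈ dotProducts x := by
  obtain ⟨b, hb⟩ := exists_ite_neg_eq_of_abs_eq hc
  refine ⟨WithLp.toLp 2 (fun i => if i = t then (if b then -(1 : ℝ) else 1) else 0), ?_, ?_⟩
  · simp only [poly241, Finset.coe_union, Set.mem_union, Finset.mem_coe, typeII, Finset.mem_image]
    exact Or.inl (Or.inr ⟨(t, b), Finset.mem_univ _, rfl⟩)
  · cases b <;> simp [EuclideanSpace.real_inner_eq_sum_mul, ← hb]

lemma half_sum_mem_dotProducts (x : E 8) {s : Finset (Fin 8)} (hs : s.card = 4) {κ : Fin 8 → ℝ}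
    (hκ : ∀ i ∈ s, |κ i| = |x i|) : (∑ i ∈ s, κ i) / 2 ∈ dotProducts x := by
  choose! ε hε using fun i (hi : i ∈ s) => exists_ite_neg_eq_of_abs_eq (hκ i hi)
  refine ⟨WithLp.toLp 2 fun i => if i ∈ s then (if ε i then -(1/2 : ℝ) else 1/2) else 0,
    ?_, ?_⟩
  · simp only [poly241, Finset.coe_union, Set.mem_union, Finset.mem_coe, typeI, Finset.mem_image]
    exact Or.inl (Or.inl ⟨(s, ε), by simp [hs], rfl⟩)
  · simp only [EuclideanSpace.real_inner_eq_sum_mul, mul_ite, mul_zero,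
      Finset.sum_ite_mem, Finset.univ_inter, Finset.sum_div]
    refine Finset.sum_congr rfl fun i hi => ?_
    rw [← hε i hi]
    split_ifs <;> ring

lemma half_add_four_mem_dotProducts (x : E 8) {a b c d : Fin 8} (hab : a ≠ b) (hac : a ≠ c)
    (had : a ≠ d) (hbc : b ≠ c) (hbd : b ≠ d) (hcd : c ≠ d) {ca cb cc cd : ℝ}
    (ha : |ca| = |x a|) (hb : |cb| = |x b|) (hc : |cc| = |x c|) (hd : |cd| = |x d|) :
    (ca + cb + cc + cd) / 2 ∈ dotProducts x := by
  have hcard : ({a, b, c, d} : Finset (Fin 8)).card = 4 :=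
    Finset.card_eq_four.mpr ⟨a, b, c, d, hab, hac, had, hbc, hbd, hcd, rfl⟩
  have := half_sum_mem_dotProducts x hcard
    (κ := fun i => if i = a then ca else if i = b then cb else if i = c then cc else cd)
    (by simp [*, hab.symm, hac.symm, had.symm, hbc.symm, hbd.symm, hcd.symm])
  simpa [Finset.sum_insert, *, hab.symm, hac.symm, had.symm, hbc.symm, hbd.symm, hcd.symm,
    add_assoc] using this

lemma five_le_ncard_dotProducts_of_abs_le (x : E 8) {a b c d : Fin 8} (hab : a ≠ b)
    (hac : a ≠ c) (had : a ≠ d) (hbc : b ≠ c) (hbd : b ≠ d) (hcd : c ≠ d) (hc : x c ≠ 0)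
    (hd : x d ≠ 0) (hca : |x c| ≤ |x a|) (hdb : |x d| ≤ |x b|) :
    5 ≤ (dotProducts x).ncard := by
  have mem := @half_add_four_mem_dotProducts x a b c d hab hac had hbc hbd hcd
  have pos : ∀ i, |(|x i|)| = |x i| := fun i => abs_abs _
  have neg : ∀ i, |(-|x i|)| = |x i| := fun i => by rw [abs_neg, abs_abs]
  refine five_le_ncard_of_mem_of_neg_mem (dotProducts_finite x)
    (p := (|x a| + |x b| + |x c| + |x d|) / 2) (q := (|x a| + |x b| + |x c| - |x d|) / 2)
    (r := (|x a| + |x b| - |x c| - |x d|) / 2) (by linarith)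
    (by linarith [abs_pos.mpr hc]) (by linarith [abs_pos.mpr hd]) ?_ ?_ ?_ ?_ ?_
  · exact mem (pos a) (pos b) (pos c) (pos d)
  · convert mem (pos a) (pos b) (pos c) (neg d) using 1; ring
  · convert mem (pos a) (pos b) (neg c) (neg d) using 1; ring
  · convert mem (neg a) (neg b) (neg c) (neg d) using 1; ring
  · convert mem (neg a) (neg b) (neg c) (pos d) using 1; ring

lemma five_le_ncard_dotProducts_of_four_ne_zero (x : E 8) {a b c d : Fin 8} (hab : a ≠ b)
    (hac : a ≠ c) (had : a ≠ d) (hbc : b ≠ c) (hbd : b ≠ d) (hcd : c ≠ d) (ha : x a ≠ 0)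
    (hb : x b ≠ 0) (hc : x c ≠ 0) (hd : x d ≠ 0) : 5 ≤ (dotProducts x).ncard := by
  rcases le_total |x c| |x a| with hca | hac' <;> rcases le_total |x d| |x b| with hdb | hbd'
  · exact five_le_ncard_dotProducts_of_abs_le x hab hac had hbc hbd hcd hc hd hca hdb
  · exact five_le_ncard_dotProducts_of_abs_le x had hac hab hcd.symm hbd.symm hbc.symm
      hc hb hca hbd'
  · exact five_le_ncard_dotProducts_of_abs_le x hbc.symm hac.symm hcd hab.symm hbd had
      ha hd hac' hdb
  · exact five_le_ncard_dotProducts_of_abs_le x hcd hac.symm hbc.symm had.symm hbd.symm hab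
      ha hb hac' hbd'

lemma five_le_ncard_dotProducts_of_three_eq_zero (x : E 8) {a b c d : Fin 8} (hbc : b ≠ c)
    (hbd : b ≠ d) (hcd : c ≠ d) (ha : x a ≠ 0) (hb : x b = 0) (hc : x c = 0) (hd : x d = 0) :
    5 ≤ (dotProducts x).ncard := by
  have hab : a ≠ b := by rintro rfl; exact ha hb
  have hac : a ≠ c := by rintro rfl; exact ha hc
  have had : a ≠ d := by rintro rfl; exact ha hd
  have mem : ∀ {ca : ℝ}, |ca| = |x a| → ca / 2 ∈ dotProducts x := fun hca => by
    simpa using half_add_four_mem_dotProducts x hab hac had hbc hbd hcd hca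
      (cb := 0) (cc := 0) (cd := 0) (by simp [hb]) (by simp [hc]) (by simp [hd])
  refine five_le_ncard_of_mem_of_neg_mem (dotProducts_finite x) (p := |x a|) (q := |x a| / 2) le_rfl
    (by positivity) (by linarith [abs_pos.mpr ha]) (mem_dotProducts_of_abs_eq x a (abs_abs _))
    (mem (abs_abs _)) (mem_dotProducts_of_abs_eq x b (by simp [hb]))
    (mem_dotProducts_of_abs_eq x a (by simp)) ?_
  rw [← neg_div]
  exact mem (by simp)

/-- Lemma 4.1 (first part): every point of `S^7` forms at least five distinct dot products with
the points of the `2_41` polytope. -/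
theorem poly241_at_least_five_dot_products (x : E 8) (hx : x ∈ sphere (0 : E 8) 1) :
    5 ≤ ((fun y => ⟪x, y⟫) '' (↑poly241 : Set (E 8))).ncard := by
  change 5 ≤ (dotProducts x).ncard
  by_cases h4 : 3 < (Finset.univ.filter fun i => x i ≠ 0).card
  · obtain ⟨a, ha, b, hb, c, hc, d, hd, hab, hac, had, hbc, hbd, hcd⟩ :=
      Finset.three_lt_card.mp h4
    simp only [Finset.mem_filter, Finset.mem_univ, true_and] at ha hb hc hd
    exact five_le_ncard_dotProducts_of_four_ne_zero x hab hac had hbc hbd hcd ha hb hc hd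
  · have h3 : 2 < (Finset.univ.filter fun i => x i = 0).card := by
      have := Finset.card_filter_add_card_filter_not (s := Finset.univ) (p := fun i => x i = 0)
      simp only [Finset.card_univ, Fintype.card_fin, ne_eq] at this h4
      omega
    obtain ⟨a, ha⟩ : ∃ a, x a ≠ 0 := by
      by_contra! h
      exact ne_zero_of_mem_sphere one_ne_zero ⟨x, hx⟩ (by ext i; simp [h])
    obtain ⟨b, hb, c, hc, d, hd, hbc, hbd, hcd⟩ := Finset.two_lt_card.mp h3
    simp only [Finset.mem_filter, Finset.mem_univ, true_and] at hb hc hd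
    exact five_le_ncard_dotProducts_of_three_eq_zero x hbc hbd hcd ha hb hc hd
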